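/- arXiv:2112.01798 — 5 statements merged into one kernel-verified Lean document; each statement's English description precedes it below -/
import Mathlib

section
/- Assume φ is bounded below by an affine function, and let {x^k} be a sequence generated by the nonmonotone proximal gradient method with indices l(k) realizing the nonmonotone maximum. Then the sequence {ψ(x^{l(k)})} is monotonically decreasing, i.e., ψ(x^{l(k+1)}) ≤ ψ(x^{l(k)}) for all k ∈ ℕ. (Lemma 4.2.) -/
open Filter Topology RealInnerProductSpace

noncomputable section

variable {E : Type*} [NormedAddCommGroup E] [InnerProductSpace ℝ E] [FiniteDimensional ℝ E]

/-- The objective `ψ = f + φ`, with values in `EReal`. -/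
def psi (f : E → ℝ) (φ : E → EReal) (x : E) : EReal :=
  (f x : EReal) + φ x

/-- `φ` is bounded from below by an affine function. -/
def AffineBoundedBelow (φ : E → EReal) : Prop :=
  ∃ (a : E) (b : ℝ), ∀ x : E, ((⟪a, x⟫ + b : ℝ) : EReal) ≤ φ x

/-- Objective of the proximal subproblem at `xb` with parameter `γ`. -/
def proxObj (f : E → ℝ) (φ : E → EReal) (xb : E) (γ : ℝ) (x : E) : EReal :=
  ((f xb + ⟪gradient f xb, x - xb⟫ + γ / 2 * ‖x - xb‖ ^ 2 : ℝ) : EReal) + φ x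

/-- `x` is a global minimizer of the proximal subproblem at `xb` with parameter `γ`. -/
def IsProxMin (f : E → ℝ) (φ : E → EReal) (xb : E) (γ : ℝ) (x : E) : Prop :=
  ∀ y : E, proxObj f φ xb γ x ≤ proxObj f φ xb γ y

/-- Fréchet (regular) subdifferential of `φ` at `x`. -/
def FrechetSubdiff (φ : E → EReal) (x : E) : Set E :=
  {η : E | ∀ ε : ℝ, 0 < ε →
    ∀ᶠ y in 𝓝[≠] x, φ x + ((⟪η, y - x⟫ - ε * ‖y - x‖ : ℝ) : EReal) ≤ φ y}

/-- Limiting (Mordukhovich) subdifferential of `φ` at `x`. -/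
def LimitingSubdiff (φ : E → EReal) (x : E) : Set E :=
  {η : E | ∃ u v : ℕ → E,
    Tendsto u atTop (𝓝 x) ∧
    Tendsto (fun j => φ (u j)) atTop (𝓝 (φ x)) ∧
    Tendsto v atTop (𝓝 η) ∧
    ∀ j : ℕ, v j ∈ FrechetSubdiff φ (u j)}

/-- `x` is an M-stationary point of `min f + φ`. -/
def MStationary (f : E → ℝ) (φ : E → EReal) (x : E) : Prop :=
  φ x ≠ ⊤ ∧ -gradient f x ∈ LimitingSubdiff φ x

/-- `ψ` is bounded from below on `dom φ`. -/
def PsiBddBelow (f : E → ℝ) (φ : E → EReal) : Prop :=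
  ∃ c : ℝ, ∀ z : E, φ z ≠ ⊤ → (c : EReal) ≤ psi f φ z

/-- The monotone proximal gradient method (Algorithm 3.1). -/
structure MonoPG (f : E → ℝ) (φ : E → EReal) (τ γmin γmax δ : ℝ)
    (x : ℕ → E) (γ : ℕ → ℝ) : Prop where
  dom : ∀ k : ℕ, φ (x k) ≠ ⊤
  stepsize : ∀ k : ℕ, ∃ γ0 : ℝ, ∃ i : ℕ, γ0 ∈ Set.Icc γmin γmax ∧ γ k = τ ^ i * γ0 ∧
    (1 ≤ i → ∃ xh : E, IsProxMin f φ (x k) (γ k / τ) xh ∧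
      psi f φ (x k) < psi f φ xh + ((δ * (γ k / τ) / 2 * ‖xh - x k‖ ^ 2 : ℝ) : EReal))
  isMin : ∀ k : ℕ, IsProxMin f φ (x k) (γ k) (x (k + 1))
  accept : ∀ k : ℕ,
    psi f φ (x (k + 1)) + ((δ * γ k / 2 * ‖x (k + 1) - x k‖ ^ 2 : ℝ) : EReal) ≤ psi f φ (x k)

/-- The nonmonotone reference value `max_{j=0,…,min{k,m}} ψ(x^{k-j})`. -/
def nmax (f : E → ℝ) (φ : E → EReal) (x : ℕ → E) (m k : ℕ) : EReal :=
  (Finset.range (min k m + 1)).sup fun j => psi f φ (x (k - j))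

/-- The nonmonotone proximal gradient method (Algorithm 4.1). -/
structure NonmonoPG (f : E → ℝ) (φ : E → EReal) (τ γmin γmax δ : ℝ) (m : ℕ)
    (x : ℕ → E) (γ : ℕ → ℝ) : Prop where
  dom : ∀ k : ℕ, φ (x k) ≠ ⊤
  stepsize : ∀ k : ℕ, ∃ γ0 : ℝ, ∃ i : ℕ, γ0 ∈ Set.Icc γmin γmax ∧ γ k = τ ^ i * γ0 ∧
    (1 ≤ i → ∃ xh : E, IsProxMin f φ (x k) (γ k / τ) xh ∧
      nmax f φ x m k < psi f φ xh + ((δ * (γ k / τ) / 2 * ‖xh - x k‖ ^ 2 : ℝ) : EReal))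
  isMin : ∀ k : ℕ, IsProxMin f φ (x k) (γ k) (x (k + 1))
  accept : ∀ k : ℕ,
    psi f φ (x (k + 1)) + ((δ * γ k / 2 * ‖x (k + 1) - x k‖ ^ 2 : ℝ) : EReal) ≤ nmax f φ x m k

/-- `l` realizes the nonmonotone maximum `ψ(x^{l(k)}) = max_{j=0,…,m_k} ψ(x^{k-j})`,
with `l k ∈ {k - m_k, …, k}`. -/
def RealizesNMax (f : E → ℝ) (φ : E → EReal) (x : ℕ → E) (m : ℕ) (l : ℕ → ℕ) : Prop :=
  ∀ k : ℕ, k - min k m ≤ l k ∧ l k ≤ k ∧ psi f φ (x (l k)) = nmax f φ x m k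

/-- `ψ` is uniformly continuous on the sublevel set `L_ψ(x⁰)`. -/
def UnifContOnLevelSet (f : E → ℝ) (φ : E → EReal) (x0 : E) : Prop :=
  ∀ ε : ℝ, 0 < ε → ∃ η : ℝ, 0 < η ∧ ∀ u v : E,
    psi f φ u ≤ psi f φ x0 → psi f φ v ≤ psi f φ x0 → ‖u - v‖ ≤ η →
    psi f φ u ≤ psi f φ v + (ε : EReal)

/-- `φ` is continuous on its domain `dom φ`. -/
def ContOnDom (φ : E → EReal) : Prop :=
  ∀ x : E, φ x ≠ ⊤ → ∀ y : ℕ → E, (∀ j : ℕ, φ (y j) ≠ ⊤) →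
    Tendsto y atTop (𝓝 x) → Tendsto (fun j => φ (y j)) atTop (𝓝 (φ x))

/-- The next window consists of `u (k + 1)` and terms of the current window. -/
theorem Finset.sup_range_window_succ_le {α : Type*} [SemilatticeSup α] [OrderBot α]
    (u : ℕ → α) (m k : ℕ)
    (h : u (k + 1) ≤ (Finset.range (min k m + 1)).sup fun j => u (k - j)) :
    ((Finset.range (min (k + 1) m + 1)).sup fun j => u (k + 1 - j)) ≤
      (Finset.range (min k m + 1)).sup fun j => u (k - j) := by
  refine Finset.sup_le fun j hj => ?_
  rw [Finset.mem_range] at hj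
  rcases j with _ | j
  · exact h
  · have hj' : j ∈ Finset.range (min k m + 1) := Finset.mem_range.mpr (by omega)
    rw [show k + 1 - (j + 1) = k - j by omega]
    exact Finset.le_sup (f := fun j => u (k - j)) hj'

namespace NonmonoPG

variable {f : E → ℝ} {φ : E → EReal} {τ γmin γmax δ : ℝ} {m : ℕ} {x : ℕ → E} {γ : ℕ → ℝ}

theorem stepsize_pos (hM : NonmonoPG f φ τ γmin γmax δ m x γ) (hτ : 1 < τ) (hγmin : 0 < γmin)
    (k : ℕ) : 0 < γ k := by
  obtain ⟨γ0, i, hγ0, hγk, -⟩ := hM.stepsize k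
  rw [hγk]
  exact mul_pos (pow_pos (zero_lt_one.trans hτ) i) (hγmin.trans_le hγ0.1)

theorem psi_succ_le_nmax (hM : NonmonoPG f φ τ γmin γmax δ m x γ) (hτ : 1 < τ)
    (hγmin : 0 < γmin) (hδ : 0 ≤ δ) (k : ℕ) : psi f φ (x (k + 1)) ≤ nmax f φ x m k := by
  have hdecrease : (0 : EReal) ≤ ((δ * γ k / 2 * ‖x (k + 1) - x k‖ ^ 2 : ℝ) : EReal) := by
    have := hM.stepsize_pos hτ hγmin k
    exact EReal.coe_nonneg.mpr (by positivity)
  exact (le_add_of_nonneg_right hdecrease).trans (hM.accept k)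

theorem nmax_succ_le (hM : NonmonoPG f φ τ γmin γmax δ m x γ) (hτ : 1 < τ)
    (hγmin : 0 < γmin) (hδ : 0 ≤ δ) (k : ℕ) : nmax f φ x m (k + 1) ≤ nmax f φ x m k :=
  Finset.sup_range_window_succ_le (fun i => psi f φ (x i)) m k
    (hM.psi_succ_le_nmax hτ hγmin hδ k)

end NonmonoPG

theorem stmt_14_general
    (f : E → ℝ) (φ : E → EReal)
    (τ γmin γmax δ : ℝ) (m : ℕ) (hτ : 1 < τ) (hγmin : 0 < γmin)
    (hδ : δ ∈ Set.Ioo (0 : ℝ) 1)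
    (x : ℕ → E) (γ : ℕ → ℝ)
    (hM : NonmonoPG f φ τ γmin γmax δ m x γ)
    (l : ℕ → ℕ) (hl : RealizesNMax f φ x m l) :
    ∀ k : ℕ, psi f φ (x (l (k + 1))) ≤ psi f φ (x (l k)) := by
  intro k
  rw [(hl (k + 1)).2.2, (hl k).2.2]
  exact hM.nmax_succ_le hτ hγmin hδ.1.le k

/-- Lemma 4.2: if `φ` is bounded below by an affine function and `{x^k}` is generated by
the nonmonotone proximal gradient method with indices `l(k)` realizing the nonmonotone
maximum, then `{ψ(x^{l(k)})}` is monotonically decreasing. -/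
theorem stmt_14
    (f : E → ℝ) (φ : E → EReal) (hf : ContDiff ℝ 1 f)
    (hbot : ∀ z : E, φ z ≠ ⊥) (hlsc : LowerSemicontinuous φ)
    (τ γmin γmax δ : ℝ) (m : ℕ) (hτ : 1 < τ) (hγmin : 0 < γmin) (hγmm : γmin ≤ γmax)
    (hδ : δ ∈ Set.Ioo (0 : ℝ) 1)
    (x : ℕ → E) (γ : ℕ → ℝ)
    (haff : AffineBoundedBelow φ)
    (hM : NonmonoPG f φ τ γmin γmax δ m x γ)
    (l : ℕ → ℕ) (hl : RealizesNMax f φ x m l) :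
    ∀ k : ℕ, psi f φ (x (l (k + 1))) ≤ psi f φ (x (l k)) :=
  stmt_14_general f φ τ γmin γmax δ m hτ hγmin hδ x γ hM l hl
end
end

section
/- Assume φ is bounded below by an affine function, and let {x^k} be a sequence generated by the nonmonotone proximal gradient method with indices l(k) realizing the nonmonotone maximum. Then all iterates x^k and all points x^{l(k)} belong to the sublevel set L_ψ(x⁰) := {x ∈ 𝕏 | ψ(x) ≤ ψ(x⁰)}. (Corollary 4.3.) -/
open Filter Topology RealInnerProductSpace

noncomputable section

variable {E : Type*} [NormedAddCommGroup E] [InnerProductSpace ℝ E] [FiniteDimensional ℝ E]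

/-- Corollary 4.3: if `φ` is bounded below by an affine function and `{x^k}` is generated
by the nonmonotone proximal gradient method with indices `l(k)` realizing the nonmonotone
maximum, then all `x^k` and all `x^{l(k)}` belong to the sublevel set
`L_ψ(x⁰) = {x | ψ(x) ≤ ψ(x⁰)}`. -/
theorem stmt_15
    (f : E → ℝ) (φ : E → EReal) (hf : ContDiff ℝ 1 f)
    (hbot : ∀ z : E, φ z ≠ ⊥) (hlsc : LowerSemicontinuous φ)
    (τ γmin γmax δ : ℝ) (m : ℕ) (hτ : 1 < τ) (hγmin : 0 < γmin) (hγmm : γmin ≤ γmax)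
    (hδ : δ ∈ Set.Ioo (0 : ℝ) 1)
    (x : ℕ → E) (γ : ℕ → ℝ)
    (haff : AffineBoundedBelow φ)
    (hM : NonmonoPG f φ τ γmin γmax δ m x γ)
    (l : ℕ → ℕ) (hl : RealizesNMax f φ x m l) :
    (∀ k : ℕ, psi f φ (x k) ≤ psi f φ (x 0)) ∧
    (∀ k : ℕ, psi f φ (x (l k)) ≤ psi f φ (x 0)) := by
  obtain ⟨hδ0, hδ1⟩ := hδ
  have hτ0 : (0:ℝ) < τ := lt_trans one_pos hτ
  have hγpos : ∀ k, 0 < γ k := by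
    intro k
    obtain ⟨γ0, i, ⟨h1, _⟩, hγ, _⟩ := hM.stepsize k
    have h0 : 0 < γ0 := lt_of_lt_of_le hγmin h1
    rw [hγ]; positivity
  have self_le : ∀ k, psi f φ (x k) ≤ nmax f φ x m k := by
    intro k
    have : (0:ℕ) ∈ Finset.range (min k m + 1) := by simp
    simpa [nmax] using Finset.le_sup (f := fun j => psi f φ (x (k - j))) this
  have key : ∀ k, psi f φ (x (k+1)) ≤ nmax f φ x m k := by
    intro k
    have hc : (0:EReal) ≤ ((δ * γ k / 2 * ‖x (k+1) - x k‖ ^ 2 : ℝ) : EReal) := by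
      have := hγpos k
      exact_mod_cast by positivity
    calc psi f φ (x (k+1)) ≤ psi f φ (x (k+1)) +
          ((δ * γ k / 2 * ‖x (k+1) - x k‖ ^ 2 : ℝ) : EReal) := le_add_of_nonneg_right hc
      _ ≤ nmax f φ x m k := hM.accept k
  have mono : ∀ k, nmax f φ x m (k+1) ≤ nmax f φ x m k := by
    intro k
    apply Finset.sup_le
    intro j hj
    rw [Finset.mem_range] at hj
    rcases Nat.eq_zero_or_pos j with h0 | h1
    · subst h0; simpa using key k
    · have hj' : j - 1 ∈ Finset.range (min k m + 1) := by
        rw [Finset.mem_range]; omega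
      have heq : k + 1 - j = k - (j - 1) := by omega
      rw [heq]
      exact Finset.le_sup (f := fun j => psi f φ (x (k - j))) hj'
  have hbase : nmax f φ x m 0 ≤ psi f φ (x 0) := by
    apply Finset.sup_le
    intro j hj
    rw [Finset.mem_range] at hj
    have : j = 0 := by omega
    subst this; simp
  have hnmax : ∀ k, nmax f φ x m k ≤ psi f φ (x 0) := by
    intro k
    induction k with
    | zero => exact hbase
    | succ n ih => exact le_trans (mono n) ih
  refine ⟨fun k => le_trans (self_le k) (hnmax k), fun k => ?_⟩
  rw [(hl k).2.2]
  exact hnmax k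
end
end

section
/- Assume that ψ is bounded from below on dom φ, that φ is bounded below by an affine function, and that ψ is uniformly continuous on the sublevel set L_ψ(x⁰) := {x ∈ 𝕏 | ψ(x) ≤ ψ(x⁰)}. Then each sequence {x^k} generated by the nonmonotone proximal gradient method satisfies ‖x^{k+1} − x^k‖ → 0 as k → ∞. (Proposition 4.4.) -/
open Filter Topology RealInnerProductSpace

noncomputable section

variable {E : Type*} [NormedAddCommGroup E] [InnerProductSpace ℝ E] [FiniteDimensional ℝ E]

/-- Proposition 4.4: if `ψ` is bounded below on `dom φ`, `φ` is bounded below by an affine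
function, and `ψ` is uniformly continuous on the sublevel set `L_ψ(x⁰)`, then each
sequence generated by the nonmonotone proximal gradient method satisfies
`‖x^{k+1} - x^k‖ → 0`. -/
theorem stmt_16
    (f : E → ℝ) (φ : E → EReal) (hf : ContDiff ℝ 1 f)
    (hbot : ∀ z : E, φ z ≠ ⊥) (hlsc : LowerSemicontinuous φ)
    (τ γmin γmax δ : ℝ) (m : ℕ) (hτ : 1 < τ) (hγmin : 0 < γmin) (hγmm : γmin ≤ γmax)
    (hδ : δ ∈ Set.Ioo (0 : ℝ) 1)
    (x : ℕ → E) (γ : ℕ → ℝ)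
    (hpsibdd : PsiBddBelow f φ) (haff : AffineBoundedBelow φ)
    (hucont : UnifContOnLevelSet f φ (x 0))
    (hM : NonmonoPG f φ τ γmin γmax δ m x γ) :
    Tendsto (fun k => ‖x (k + 1) - x k‖) atTop (𝓝 0) := by
  obtain ⟨hδ0, hδ1⟩ := hδ
  -- real-valued objective along the iterates
  set Ψ : ℕ → ℝ := fun k => f (x k) + (φ (x k)).toReal with hΨdef
  have hpsi : ∀ k, psi f φ (x k) = ((Ψ k : ℝ) : EReal) := by
    intro k
    have h : φ (x k) = (((φ (x k)).toReal : ℝ) : EReal) :=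
      (EReal.coe_toReal (hM.dom k) (hbot _)).symm
    rw [psi]
    rw [h, ← EReal.coe_add]
  -- step sizes are bounded below
  have hγ : ∀ k, γmin ≤ γ k := by
    intro k
    obtain ⟨γ0, i, h1, h3, -⟩ := hM.stepsize k
    have hpow : (1:ℝ) ≤ τ ^ i := one_le_pow₀ hτ.le
    have hγ0 : 0 < γ0 := lt_of_lt_of_le hγmin h1.1
    calc γmin ≤ γ0 := h1.1
      _ = 1 * γ0 := (one_mul _).symm
      _ ≤ τ ^ i * γ0 := by nlinarith
      _ = γ k := h3.symm
  have hne : ∀ k, (Finset.range (min k m + 1)).Nonempty := fun k => Finset.nonempty_range_add_one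
  -- real nonmonotone max
  set w : ℕ → ℝ := fun k => (Finset.range (min k m + 1)).sup' (hne k) (fun j => Ψ (k - j))
    with hwdef
  have hnmax : ∀ k, nmax f φ x m k = ((w k : ℝ) : EReal) := by
    intro k
    rw [nmax, ← Finset.sup'_eq_sup (hne k)]
    have hfun : (fun j => psi f φ (x (k - j))) = fun j => ((Ψ (k - j) : ℝ) : EReal) :=
      funext fun j => hpsi _
    rw [hfun]
    exact (Finset.comp_sup'_eq_sup'_comp (hne k) Real.toEReal
      (fun a b => EReal.coe_strictMono.monotone.map_sup a b)).symm
  -- accept condition in real form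
  have haccept : ∀ k, Ψ (k+1) + δ * γmin / 2 * ‖x (k+1) - x k‖^2 ≤ w k := by
    intro k
    have h := hM.accept k
    rw [hpsi, hnmax, ← EReal.coe_add, EReal.coe_le_coe_iff] at h
    have h2 : δ * γmin / 2 * ‖x (k+1) - x k‖^2 ≤ δ * γ k / 2 * ‖x (k+1) - x k‖^2 := by
      have hm : δ * γmin ≤ δ * γ k := mul_le_mul_of_nonneg_left (hγ k) hδ0.le
      exact mul_le_mul_of_nonneg_right (by linarith) (sq_nonneg _)
    linarith
  have hd2 : ∀ k, (0:ℝ) ≤ δ * γmin / 2 * ‖x (k+1) - x k‖^2 := by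
    intro k; positivity
  have hΨle : ∀ k, Ψ (k+1) ≤ w k := fun k => le_trans (le_add_of_nonneg_right (hd2 k)) (haccept k)
  have hΨlew : ∀ k, Ψ k ≤ w k := by
    intro k
    have h0 : 0 ∈ Finset.range (min k m + 1) := by simp
    have h := Finset.le_sup' (fun j => Ψ (k - j)) h0
    simp only [Nat.sub_zero] at h
    exact h
  -- w is antitone
  have hwanti : ∀ k, w (k+1) ≤ w k := by
    intro k
    apply Finset.sup'_le
    intro j hj
    rcases Nat.eq_zero_or_pos j with h0 | h1
    · subst h0; simpa using hΨle k
    · have hj' : j - 1 ∈ Finset.range (min k m + 1) := by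
        simp only [Finset.mem_range] at hj ⊢; omega
      have he : k + 1 - j = k - (j - 1) := by omega
      rw [he]
      exact Finset.le_sup' (fun j => Ψ (k - j)) hj'
  have hwA : Antitone w := antitone_nat_of_succ_le hwanti
  -- bounded below
  obtain ⟨c, hc⟩ := hpsibdd
  have hcΨ : ∀ k, c ≤ Ψ k := by
    intro k
    have := hc (x k) (hM.dom k)
    rw [hpsi] at this
    exact_mod_cast this
  have hcw : ∀ k, c ≤ w k := fun k => le_trans (hcΨ k) (hΨlew k)
  set L : ℝ := ⨅ k, w k with hLdef
  have hwL : Tendsto w atTop (𝓝 L) :=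
    tendsto_atTop_ciInf hwA ⟨c, fun y ⟨k, hk⟩ => hk ▸ hcw k⟩
  -- level set containment
  have hw0 : w 0 = Ψ 0 := by simp [hwdef]
  have hlevel : ∀ n, Ψ n ≤ Ψ 0 := by
    intro n
    calc Ψ n ≤ w n := hΨlew n
      _ ≤ w 0 := hwA (Nat.zero_le n)
      _ = Ψ 0 := hw0
  -- uniform continuity in real form
  have hUC : ∀ ε : ℝ, 0 < ε → ∃ η : ℝ, 0 < η ∧ ∀ a b : ℕ,
      ‖x a - x b‖ ≤ η → |Ψ a - Ψ b| ≤ ε := by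
    intro ε hε
    obtain ⟨η, hη, H⟩ := hucont ε hε
    refine ⟨η, hη, fun a b hab => ?_⟩
    have hla : psi f φ (x a) ≤ psi f φ (x 0) := by
      rw [hpsi, hpsi]; exact_mod_cast hlevel a
    have hlb : psi f φ (x b) ≤ psi f φ (x 0) := by
      rw [hpsi, hpsi]; exact_mod_cast hlevel b
    have h1 := H (x a) (x b) hla hlb hab
    have h2 := H (x b) (x a) hlb hla (by rw [norm_sub_rev]; exact hab)
    rw [hpsi, hpsi, ← EReal.coe_add, EReal.coe_le_coe_iff] at h1 h2
    rw [abs_sub_le_iff]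
    constructor <;> linarith
  -- selector realizing the max
  have hsel : ∀ k, ∃ j ∈ Finset.range (min k m + 1), w k = Ψ (k - j) := by
    intro k
    exact Finset.exists_mem_eq_sup' (hne k) _
  choose jsel hjmem hweq using hsel
  set l : ℕ → ℕ := fun k => k - jsel k with hldef
  have hjle : ∀ k, jsel k ≤ min k m := fun k =>
    Nat.lt_succ_iff.mp (Finset.mem_range.mp (hjmem k))
  have hl1 : ∀ k, l k ≤ k := fun k => Nat.sub_le _ _
  have hl2 : ∀ k, k ≤ l k + m := by
    intro k
    have := hjle k
    simp only [hldef]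
    omega
  have hΨl : ∀ k, Ψ (l k) = w k := fun k => (hweq k).symm
  -- main induction : Ψ (l k - j) → L for every fixed j
  have main : ∀ j : ℕ, Tendsto (fun k => Ψ (l k - j)) atTop (𝓝 L) := by
    intro j
    induction j with
    | zero =>
      have : (fun k => Ψ (l k - 0)) = w := funext fun k => by
        rw [Nat.sub_zero]; exact hΨl k
      rw [this]; exact hwL
    | succ j ih =>
      have hidx : Tendsto (fun k => l k - (j+1)) atTop atTop := by
        rw [tendsto_atTop_atTop]
        intro b
        refine ⟨b + m + j + 1, fun k hk => ?_⟩
        have := hl2 k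
        omega
      have hw' : Tendsto (fun k => w (l k - (j+1))) atTop (𝓝 L) := hwL.comp hidx
      have hev : ∀ᶠ k in atTop, l k - (j+1) + 1 = l k - j := by
        rw [eventually_atTop]
        refine ⟨m + j + 2, fun k hk => ?_⟩
        have := hl2 k
        omega
      have hcpos : (0:ℝ) < δ * γmin / 2 := by positivity
      have hsq : Tendsto (fun k => ‖x (l k - j) - x (l k - (j+1))‖^2) atTop (𝓝 0) := by
        have hg : Tendsto (fun k => (w (l k - (j+1)) - Ψ (l k - j)) / (δ * γmin / 2))
            atTop (𝓝 0) := by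
          have := (hw'.sub ih).div_const (δ * γmin / 2)
          simpa using this
        refine squeeze_zero' (Eventually.of_forall fun k => sq_nonneg _) ?_ hg
        filter_upwards [hev] with k hk
        rw [le_div_iff₀ hcpos]
        have h := haccept (l k - (j+1))
        rw [hk] at h
        linarith
      have hd0 : Tendsto (fun k => ‖x (l k - j) - x (l k - (j+1))‖) atTop (𝓝 0) := by
        have h := (Real.continuous_sqrt.tendsto 0).comp hsq
        have heq : (fun k => Real.sqrt (‖x (l k - j) - x (l k - (j+1))‖^2)) =
            fun k => ‖x (l k - j) - x (l k - (j+1))‖ :=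
          funext fun k => Real.sqrt_sq (norm_nonneg _)
        rw [Function.comp_def, heq] at h
        simpa using h
      -- uniform continuity step
      have hdiff : Tendsto (fun k => Ψ (l k - (j+1)) - Ψ (l k - j)) atTop (𝓝 0) := by
        rw [NormedAddCommGroup.tendsto_nhds_zero]
        intro ε hε
        obtain ⟨η, hη, H⟩ := hUC (ε/2) (by linarith)
        have hsmall : ∀ᶠ k in atTop, ‖x (l k - j) - x (l k - (j+1))‖ < η :=
          hd0.eventually_lt_const hη
        filter_upwards [hsmall] with k hk
        have := H (l k - (j+1)) (l k - j) (by rw [norm_sub_rev]; exact hk.le)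
        have habs : ‖Ψ (l k - (j+1)) - Ψ (l k - j)‖ = |Ψ (l k - (j+1)) - Ψ (l k - j)| := rfl
        rw [habs]
        linarith
      have := hdiff.add ih
      simpa using this
  -- Ψ (k+1) → L
  have hΨtend : Tendsto (fun k => Ψ (k+1)) atTop (𝓝 L) := by
    rw [Metric.tendsto_atTop]
    intro ε hε
    have H : ∀ j ∈ Finset.range (m+1), ∀ᶠ k in atTop, |Ψ (l k - j) - L| < ε := by
      intro j _
      have := (main j).eventually (eventually_abs_sub_lt L hε)
      simpa using this
    rw [← Filter.eventually_all_finset] at H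
    obtain ⟨N, hN⟩ := eventually_atTop.mp H
    refine ⟨N, fun k hk => ?_⟩
    have hk' : N ≤ k + m + 1 := by omega
    have hH := hN (k + m + 1) hk'
    have h1 := hl1 (k + m + 1)
    have h2 := hl2 (k + m + 1)
    have hjm : l (k + m + 1) - (k + 1) ∈ Finset.range (m+1) := by
      rw [Finset.mem_range]; omega
    have := hH _ hjm
    have hee : l (k + m + 1) - (l (k + m + 1) - (k + 1)) = k + 1 := by omega
    rw [hee] at this
    rw [Real.dist_eq]
    exact this
  -- conclusion
  have hcpos : (0:ℝ) < δ * γmin / 2 := by positivity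
  have hsq : Tendsto (fun k => ‖x (k+1) - x k‖^2) atTop (𝓝 0) := by
    have hg : Tendsto (fun k => (w k - Ψ (k+1)) / (δ * γmin / 2)) atTop (𝓝 0) := by
      have := (hwL.sub hΨtend).div_const (δ * γmin / 2)
      simpa using this
    refine squeeze_zero' (Eventually.of_forall fun k => sq_nonneg _)
      (Eventually.of_forall fun k => ?_) hg
    rw [le_div_iff₀ hcpos]
    linarith [haccept k]
  have h := (Real.continuous_sqrt.tendsto 0).comp hsq
  have heq : (fun k => Real.sqrt (‖x (k+1) - x k‖^2)) = fun k => ‖x (k+1) - x k‖ :=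
    funext fun k => Real.sqrt_sq (norm_nonneg _)
  rw [Function.comp_def, heq] at h
  simpa using h
end
end

section
/- Assume that ψ is bounded from below on dom φ, that φ is bounded below by an affine function, and that ψ is uniformly continuous on the sublevel set L_ψ(x⁰) := {x ∈ 𝕏 | ψ(x) ≤ ψ(x⁰)}. Let {x^k} be generated by the nonmonotone proximal gradient method with indices l(k) realizing the nonmonotone maximum, and let ψ* := lim_{k→∞} ψ(x^{l(k)}) (which exists). Then for every fixed integer j ≥ 1 one has x^{l(k)−j+1} − x^{l(k)−j} → 0 and ψ(x^{l(k)−j}) → ψ* as k → ∞ (for k large enough so that l(k) − j ≥ 0). -/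
open Filter Topology RealInnerProductSpace

noncomputable section

variable {E : Type*} [NormedAddCommGroup E] [InnerProductSpace ℝ E] [FiniteDimensional ℝ E]

/-- If `ψ` is bounded below on `dom φ`, `φ` is bounded below by an affine function, and
`ψ` is uniformly continuous on `L_ψ(x⁰)`, then for the nonmonotone proximal gradient
method the limit `ψ* = lim_k ψ(x^{l(k)})` exists, and for every fixed `j ≥ 1` one has
`x^{l(k)-j+1} - x^{l(k)-j} → 0` and `ψ(x^{l(k)-j}) → ψ*` as `k → ∞`. -/
theorem stmt_17
    (f : E → ℝ) (φ : E → EReal) (hf : ContDiff ℝ 1 f)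
    (hbot : ∀ z : E, φ z ≠ ⊥) (hlsc : LowerSemicontinuous φ)
    (τ γmin γmax δ : ℝ) (m : ℕ) (hτ : 1 < τ) (hγmin : 0 < γmin) (hγmm : γmin ≤ γmax)
    (hδ : δ ∈ Set.Ioo (0 : ℝ) 1)
    (x : ℕ → E) (γ : ℕ → ℝ)
    (hpsibdd : PsiBddBelow f φ) (haff : AffineBoundedBelow φ)
    (hucont : UnifContOnLevelSet f φ (x 0))
    (hM : NonmonoPG f φ τ γmin γmax δ m x γ)
    (l : ℕ → ℕ) (hl : RealizesNMax f φ x m l) :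
    ∃ psistar : EReal,
      Tendsto (fun k => psi f φ (x (l k))) atTop (𝓝 psistar) ∧
      ∀ j : ℕ, 1 ≤ j →
        Tendsto (fun k => x (l k - j + 1) - x (l k - j)) atTop (𝓝 0) ∧
        Tendsto (fun k => psi f φ (x (l k - j))) atTop (𝓝 psistar) := by
  obtain ⟨hδ0, hδ1⟩ := hδ
  obtain ⟨c, hc⟩ := hpsibdd
  set Pr : ℕ → ℝ := fun n => f (x n) + (φ (x n)).toReal with hPrdef
  have hφfin : ∀ n, φ (x n) = (((φ (x n)).toReal : ℝ) : EReal) := fun n =>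
    (EReal.coe_toReal (hM.dom n) (hbot _)).symm
  have hpsieq : ∀ n, psi f φ (x n) = ((Pr n : ℝ) : EReal) := by
    intro n
    simp only [hPrdef, psi]
    rw [EReal.coe_add]
    congr 1
    exact hφfin n
  -- stepsizes are bounded below by γmin
  have hγ : ∀ k, γmin ≤ γ k := by
    intro k
    obtain ⟨γ0, i, hmem, heq, _⟩ := hM.stepsize k
    have h1 : (1:ℝ) ≤ τ ^ i := one_le_pow₀ hτ.le
    have h0 : (0:ℝ) ≤ γ0 := hγmin.le.trans hmem.1
    rw [heq]
    nlinarith [hmem.1, mul_nonneg (sub_nonneg.2 h1) h0]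
  have hγpos : ∀ k, 0 < γ k := fun k => hγmin.trans_le (hγ k)
  -- accept inequality in real form
  have haccR : ∀ k, Pr (k+1) + δ * γ k / 2 * ‖x (k+1) - x k‖ ^ 2 ≤ Pr (l k) := by
    intro k
    have h := hM.accept k
    rw [← (hl k).2.2, hpsieq (k+1), hpsieq (l k), ← EReal.coe_add,
      EReal.coe_le_coe_iff] at h
    exact h
  -- every iterate value is below the nonmonotone max
  have hle_nmax : ∀ n, psi f φ (x n) ≤ nmax f φ x m n := by
    intro n
    have h0 : (0:ℕ) ∈ Finset.range (min n m + 1) := Finset.mem_range.2 (Nat.succ_pos _)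
    simpa [nmax] using Finset.le_sup (f := fun j => psi f φ (x (n - j))) h0
  -- nmax is antitone
  have hmono : ∀ k, nmax f φ x m (k+1) ≤ nmax f φ x m k := by
    intro k
    apply Finset.sup_le
    intro j hj
    rcases Nat.eq_zero_or_pos j with rfl | hj1
    · simp only [Nat.sub_zero]
      refine le_trans ?_ (hM.accept k)
      rw [hpsieq (k+1)]
      have hnn : (0:ℝ) ≤ δ * γ k / 2 * ‖x (k + 1) - x k‖ ^ 2 := by
        have := hγpos k
        positivity
      rw [← EReal.coe_add, EReal.coe_le_coe_iff]
      linarith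
    · have hj' : j - 1 ∈ Finset.range (min k m + 1) := by
        simp only [Finset.mem_range] at hj ⊢
        omega
      have hkj : k + 1 - j = k - (j-1) := by omega
      rw [hkj]
      exact Finset.le_sup (f := fun j => psi f φ (x (k - j))) hj'
  have hnmAnti : Antitone (nmax f φ x m) := antitone_nat_of_succ_le hmono
  have hnm0 : nmax f φ x m 0 = psi f φ (x 0) := by
    refine le_antisymm (Finset.sup_le fun j hj => ?_) (hle_nmax 0)
    simp [Nat.zero_sub]
  -- all iterates lie in the sublevel set
  have hlev : ∀ n, psi f φ (x n) ≤ psi f φ (x 0) := fun n =>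
    (hle_nmax n).trans ((hnmAnti (Nat.zero_le n)).trans_eq hnm0)
  -- the real sequence k ↦ Pr (l k) is antitone and bounded below
  have hNmono : Antitone (fun k => Pr (l k)) := by
    apply antitone_nat_of_succ_le
    intro k
    have h := hmono k
    rw [← (hl k).2.2, ← (hl (k+1)).2.2, hpsieq (l k), hpsieq (l (k+1)),
      EReal.coe_le_coe_iff] at h
    exact h
  have hcN : ∀ k, c ≤ Pr (l k) := by
    intro k
    have h := hc (x (l k)) (hM.dom _)
    rw [hpsieq (l k), EReal.coe_le_coe_iff] at h
    exact h
  set S : ℝ := ⨅ k, Pr (l k) with hSdef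
  have hNtend : Tendsto (fun k => Pr (l k)) atTop (𝓝 S) := by
    apply tendsto_atTop_ciInf hNmono
    refine ⟨c, ?_⟩
    rintro y ⟨k, rfl⟩
    exact hcN k
  -- l k → ∞ with the shift
  have htop : ∀ j : ℕ, Tendsto (fun k => l k - j) atTop atTop := by
    intro j
    rw [tendsto_atTop]
    intro b
    filter_upwards [eventually_ge_atTop (b + m + j)] with k hk
    have h1 := (hl k).1
    have h2 : min k m ≤ m := min_le_right _ _
    omega
  -- uniform continuity in real form
  have hUC : ∀ ε : ℝ, 0 < ε → ∃ η : ℝ, 0 < η ∧ ∀ a b : ℕ,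
      ‖x a - x b‖ ≤ η → |Pr a - Pr b| ≤ ε := by
    intro ε hε
    obtain ⟨η, hη, H⟩ := hucont ε hε
    refine ⟨η, hη, fun a b hab => ?_⟩
    have h1 := H (x a) (x b) (hlev a) (hlev b) hab
    have h2 := H (x b) (x a) (hlev b) (hlev a) (by rwa [norm_sub_rev])
    rw [hpsieq a, hpsieq b, ← EReal.coe_add, EReal.coe_le_coe_iff] at h1
    rw [hpsieq a, hpsieq b, ← EReal.coe_add, EReal.coe_le_coe_iff] at h2
    rw [abs_le]
    constructor <;> linarith
  -- the main inductive claims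
  have stepD : ∀ j : ℕ, Tendsto (fun k => Pr (l k - j)) atTop (𝓝 S) →
      Tendsto (fun k => x (l k - j) - x (l k - (j+1))) atTop (𝓝 0) := by
    intro j hA
    have hC : (0:ℝ) < δ * γmin / 2 := by positivity
    have hsq : Tendsto (fun k => ‖x (l k - j) - x (l k - (j+1))‖ ^ 2) atTop (𝓝 0) := by
      have h1 : Tendsto (fun k => Pr (l (l k - (j+1)))) atTop (𝓝 S) := by
        have := hNtend.comp (htop (j+1))
        exact this
      have hb : Tendsto (fun k => (Pr (l (l k - (j+1))) - Pr (l k - j)) / (δ * γmin / 2))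
          atTop (𝓝 0) := by
        have := (h1.sub hA).div_const (δ * γmin / 2)
        simpa using this
      refine squeeze_zero' (Eventually.of_forall fun k => by positivity) ?_ hb
      filter_upwards [eventually_ge_atTop (m + j + 1)] with k hk
      have h1' := (hl k).1
      have h2' : min k m ≤ m := min_le_right _ _
      have hlk : j + 1 ≤ l k := by omega
      have hκ1 : l k - (j+1) + 1 = l k - j := by omega
      have hacc := haccR (l k - (j+1))
      rw [hκ1] at hacc
      have hγκ := hγ (l k - (j+1))
      have hnn : (0:ℝ) ≤ ‖x (l k - j) - x (l k - (j+1))‖ ^ 2 := sq_nonneg _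
      rw [le_div_iff₀ hC]
      nlinarith [mul_nonneg (mul_nonneg hδ0.le hnn) (sub_nonneg.2 hγκ)]
    have hnorm : Tendsto (fun k => ‖x (l k - j) - x (l k - (j+1))‖) atTop (𝓝 0) := by
      have h2 := hsq.sqrt
      simp only [Real.sqrt_zero] at h2
      exact h2.congr fun k => Real.sqrt_sq (norm_nonneg _)
    exact tendsto_zero_iff_norm_tendsto_zero.mpr hnorm
  have stepA : ∀ j : ℕ, Tendsto (fun k => Pr (l k - j)) atTop (𝓝 S) →
      Tendsto (fun k => x (l k - j) - x (l k - (j+1))) atTop (𝓝 0) →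
      Tendsto (fun k => Pr (l k - (j+1))) atTop (𝓝 S) := by
    intro j hA hD
    rw [Metric.tendsto_atTop]
    intro ε hε
    obtain ⟨η, hη, hU⟩ := hUC (ε/2) (half_pos hε)
    have e1 : ∀ᶠ k in atTop, ‖x (l k - j) - x (l k - (j+1))‖ < η :=
      (tendsto_zero_iff_norm_tendsto_zero.mp hD).eventually_lt_const hη
    obtain ⟨N, hN⟩ := Metric.tendsto_atTop.mp hA (ε/2) (half_pos hε)
    have e2 : ∀ᶠ k in atTop, dist (Pr (l k - j)) S < ε/2 := eventually_atTop.mpr ⟨N, hN⟩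
    obtain ⟨K, hK⟩ := eventually_atTop.mp (e1.and e2)
    refine ⟨K, fun k hk => ?_⟩
    obtain ⟨h1, h2⟩ := hK k hk
    have hd1 : |Pr (l k - (j+1)) - Pr (l k - j)| ≤ ε/2 :=
      hU _ _ (by rw [norm_sub_rev]; exact h1.le)
    rw [Real.dist_eq] at h2 ⊢
    calc |Pr (l k - (j+1)) - S| ≤ |Pr (l k - (j+1)) - Pr (l k - j)| + |Pr (l k - j) - S| :=
          abs_sub_le _ _ _
      _ < ε := by linarith
  have key : ∀ j : ℕ, Tendsto (fun k => Pr (l k - j)) atTop (𝓝 S) ∧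
      Tendsto (fun k => x (l k - j) - x (l k - (j+1))) atTop (𝓝 0) := by
    intro j
    induction j with
    | zero =>
      have hA : Tendsto (fun k => Pr (l k - 0)) atTop (𝓝 S) := by
        simpa using hNtend
      exact ⟨hA, stepD 0 hA⟩
    | succ i ih =>
      have hA := stepA i ih.1 ih.2
      exact ⟨hA, stepD (i+1) hA⟩
  -- assemble
  refine ⟨((S : ℝ) : EReal), ?_, ?_⟩
  · have := (continuous_coe_real_ereal.tendsto S).comp hNtend
    exact this.congr fun k => (hpsieq (l k)).symm
  · intro j hj
    obtain ⟨i, rfl⟩ : ∃ i, j = i + 1 := ⟨j - 1, by omega⟩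
    constructor
    · refine ((key i).2).congr' ?_
      filter_upwards [eventually_ge_atTop (m + i + 1)] with k hk
      have h1 := (hl k).1
      have h2 : min k m ≤ m := min_le_right _ _
      have : l k - (i+1) + 1 = l k - i := by omega
      rw [this]
    · have := (continuous_coe_real_ereal.tendsto S).comp (key (i+1)).1
      exact this.congr fun k => (hpsieq (l k - (i+1))).symm
end
end

section
/- Assume that ψ is bounded from below on dom φ, that φ is bounded below by an affine function, and that ψ is uniformly continuous on the sublevel set L_ψ(x⁰) := {x ∈ 𝕏 | ψ(x) ≤ ψ(x⁰)}. Let {x^k} be generated by the nonmonotone proximal gradient method and suppose x* is an isolated accumulation point of {x^k}, i.e., x* is an accumulation point and there is ε > 0 such that no other accumulation point of {x^k} lies in the ball of radius ε around x*. Then the entire sequence {x^k} converges to x*. (Remark 4.6(4).) -/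
open Filter Topology RealInnerProductSpace

noncomputable section

variable {E : Type*} [NormedAddCommGroup E] [InnerProductSpace ℝ E] [FiniteDimensional ℝ E]

/-- Real-valued nonmonotone reference value. -/
def nmaxR (Ψ : ℕ → ℝ) (m k : ℕ) : ℝ :=
  (Finset.range (min k m + 1)).sup' ⟨0, Finset.mem_range.2 (Nat.succ_pos _)⟩
    (fun j => Ψ (k - j))

lemma le_nmaxR_of_mem (Ψ : ℕ → ℝ) (m k j : ℕ) (hj : j ≤ min k m) :
    Ψ (k - j) ≤ nmaxR Ψ m k := by
  unfold nmaxR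
  exact Finset.le_sup' (fun j => Ψ (k - j)) (Finset.mem_range.2 (Nat.lt_succ_of_le hj))

lemma le_nmaxR (Ψ : ℕ → ℝ) (m k : ℕ) : Ψ k ≤ nmaxR Ψ m k := by
  simpa using le_nmaxR_of_mem Ψ m k 0 (Nat.zero_le _)

lemma nmaxR_zero (Ψ : ℕ → ℝ) (m : ℕ) : nmaxR Ψ m 0 = Ψ 0 := by
  simp [nmaxR]

lemma nmaxR_succ_le (Ψ : ℕ → ℝ) (m k : ℕ) (h : Ψ (k + 1) ≤ nmaxR Ψ m k) :
    nmaxR Ψ m (k + 1) ≤ nmaxR Ψ m k := by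
  apply Finset.sup'_le
  intro j hj
  rcases Nat.eq_zero_or_pos j with rfl | hjpos
  · simpa using h
  · have hj' : j ≤ min (k + 1) m := Nat.lt_succ_iff.1 (Finset.mem_range.1 hj)
    have h1 : k + 1 - j = k - (j - 1) := by omega
    rw [h1]
    exact le_nmaxR_of_mem Ψ m k (j - 1) (by omega)

lemma nmaxR_antitone (Ψ : ℕ → ℝ) (m : ℕ) (h : ∀ k, Ψ (k + 1) ≤ nmaxR Ψ m k) :
    Antitone (nmaxR Ψ m) :=
  antitone_nat_of_succ_le fun k => nmaxR_succ_le Ψ m k (h k)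

/-- Grippo-type lemma: in the nonmonotone scheme, the step measures tend to zero. -/
lemma grippo (Ψ d : ℕ → ℝ) (m : ℕ) (α c : ℝ) (hα : 0 < α) (hd : ∀ k, 0 ≤ d k)
    (hacc : ∀ k, Ψ (k + 1) + α * d k ^ 2 ≤ nmaxR Ψ m k)
    (hbdd : ∀ k, c ≤ Ψ k)
    (huc : ∀ ε : ℝ, 0 < ε → ∃ η : ℝ, 0 < η ∧ ∀ k, d k ≤ η → |Ψ (k + 1) - Ψ k| ≤ ε) :
    Tendsto d atTop (𝓝 0) := by
  set M : ℕ → ℝ := nmaxR Ψ m with hM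
  have hsucc : ∀ k, Ψ (k + 1) ≤ M k := by
    intro k
    nlinarith [hacc k, sq_nonneg (d k), hd k]
  have hanti : Antitone M := nmaxR_antitone Ψ m hsucc
  have hMbdd : ∀ k, c ≤ M k := fun k => (hbdd k).trans (le_nmaxR Ψ m k)
  set Mstar : ℝ := ⨅ k, M k with hMs
  have hMtend : Tendsto M atTop (𝓝 Mstar) :=
    tendsto_atTop_ciInf hanti ⟨c, by rintro _ ⟨k, rfl⟩; exact hMbdd k⟩
  -- choose indices realizing the max
  have hex : ∀ k, ∃ j, j ≤ min k m ∧ M k = Ψ (k - j) := by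
    intro k
    obtain ⟨j, hj, hje⟩ := Finset.exists_mem_eq_sup'
      (⟨0, Finset.mem_range.2 (Nat.succ_pos _)⟩ : (Finset.range (min k m + 1)).Nonempty)
      (fun j => Ψ (k - j))
    exact ⟨j, Nat.lt_succ_iff.1 (Finset.mem_range.1 hj), hje⟩
  choose jmax hjmax hMeq using hex
  set l : ℕ → ℕ := fun k => k - jmax k with hl
  have hlk : ∀ k, k - m ≤ l k := fun k => by
    have := hjmax k; simp only [hl]; omega
  have hlk' : ∀ k, l k ≤ k := fun k => Nat.sub_le _ _
  have hltend : Tendsto l atTop atTop :=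
    tendsto_atTop_mono hlk (tendsto_sub_atTop_nat m)
  have hΨl : ∀ k, Ψ (l k) = M k := fun k => (hMeq k).symm
  -- the induction
  have P : ∀ j : ℕ, Tendsto (fun k => Ψ (l k - j)) atTop (𝓝 Mstar) := by
    intro j
    induction j with
    | zero => simpa [hΨl] using hMtend
    | succ j ih =>
      -- step distances at index l k - j - 1 tend to zero
      have hlarge : ∀ᶠ k in atTop, j + 1 ≤ l k := by
        filter_upwards [eventually_ge_atTop (m + j + 1)] with k hk
        have := hlk k; omega
      have hMl : Tendsto (fun k => M (l k - j - 1)) atTop (𝓝 Mstar) :=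
        hMtend.comp (((tendsto_sub_atTop_nat (j + 1)).comp hltend).congr
          (fun k => by simp only [Function.comp_apply]; omega))
      have hd2 : Tendsto (fun k => d (l k - j - 1) ^ 2) atTop (𝓝 0) := by
        have hbound : ∀ᶠ k in atTop, d (l k - j - 1) ^ 2 ≤
            (M (l k - j - 1) - Ψ (l k - j)) / α := by
          filter_upwards [hlarge] with k hk
          have h1 : l k - j - 1 + 1 = l k - j := by omega
          have := hacc (l k - j - 1)
          rw [h1] at this
          rw [le_div_iff₀ hα]
          nlinarith
        have hg : Tendsto (fun k => (M (l k - j - 1) - Ψ (l k - j)) / α) atTop (𝓝 0) := by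
          have := (hMl.sub ih).div_const α
          simpa using this
        exact squeeze_zero' (Eventually.of_forall fun k => sq_nonneg _) hbound hg
      have hdl : Tendsto (fun k => d (l k - j - 1)) atTop (𝓝 0) := by
        have h0 : Tendsto (fun k => Real.sqrt (d (l k - j - 1) ^ 2)) atTop
            (𝓝 (Real.sqrt 0)) := (Real.continuous_sqrt.tendsto 0).comp hd2
        rw [Real.sqrt_zero] at h0
        exact h0.congr fun k => Real.sqrt_sq (hd _)
      -- difference of Ψ values tends to zero
      have hdiff : Tendsto (fun k => Ψ (l k - j) - Ψ (l k - j - 1)) atTop (𝓝 0) := by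
        rw [NormedAddCommGroup.tendsto_nhds_zero]
        intro ε hε
        obtain ⟨η, hη, hη'⟩ := huc (ε / 2) (by linarith)
        have hev : ∀ᶠ k in atTop, d (l k - j - 1) ≤ η := by
          have := (Metric.tendsto_atTop.1 hdl) η hη
          obtain ⟨N, hN⟩ := this
          filter_upwards [eventually_ge_atTop N] with k hk
          have := hN k hk
          rw [Real.dist_eq] at this
          have := (abs_lt.1 this).2
          linarith
        filter_upwards [hev, hlarge] with k hk1 hk2
        have h1 : l k - j - 1 + 1 = l k - j := by omega
        have := hη' (l k - j - 1) hk1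
        rw [h1] at this
        rw [Real.norm_eq_abs]
        calc |Ψ (l k - j) - Ψ (l k - j - 1)| ≤ ε / 2 := this
          _ < ε := by linarith
      have : Tendsto (fun k => Ψ (l k - j) - (Ψ (l k - j) - Ψ (l k - j - 1)))
          atTop (𝓝 (Mstar - 0)) := ih.sub hdiff
      have h2 : ∀ k, Ψ (l k - j) - (Ψ (l k - j) - Ψ (l k - j - 1)) = Ψ (l k - (j + 1)) := by
        intro k; have : l k - (j + 1) = l k - j - 1 := by omega
        rw [this]; ring
      simpa [h2] using this
  -- whole sequence Ψ → Mstar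
  have hΨtend : Tendsto Ψ atTop (𝓝 Mstar) := by
    rw [Metric.tendsto_atTop]
    intro ε hε
    have hNj : ∀ j, ∃ N, ∀ k ≥ N, dist (Ψ (l k - j)) Mstar < ε := fun j =>
      Metric.tendsto_atTop.1 (P j) ε hε
    choose N hN using hNj
    refine ⟨(Finset.range (m + 1)).sup N, fun n hn => ?_⟩
    set j : ℕ := l (n + m) - n with hj
    have hjle : j ≤ m := by have := hlk (n + m); have := hlk' (n + m); omega
    have hnj : l (n + m) - j = n := by have := hlk (n + m); omega
    have hNle : N j ≤ n := le_trans
      (Finset.le_sup (Finset.mem_range.2 (Nat.lt_succ_of_le hjle))) hn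
    have := hN j (n + m) (by omega)
    rwa [hnj] at this
  -- conclude
  have hd2 : Tendsto (fun k => d k ^ 2) atTop (𝓝 0) := by
    have hbound : ∀ k, d k ^ 2 ≤ (M k - Ψ (k + 1)) / α := by
      intro k
      rw [le_div_iff₀ hα]
      nlinarith [hacc k]
    have hg : Tendsto (fun k => (M k - Ψ (k + 1)) / α) atTop (𝓝 0) := by
      have := (hMtend.sub (hΨtend.comp (tendsto_add_atTop_nat 1))).div_const α
      simpa using this
    exact squeeze_zero (fun k => sq_nonneg _) hbound hg
  have h0 : Tendsto (fun k => Real.sqrt (d k ^ 2)) atTop (𝓝 (Real.sqrt 0)) :=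
    (Real.continuous_sqrt.tendsto 0).comp hd2
  rw [Real.sqrt_zero] at h0
  exact h0.congr fun k => Real.sqrt_sq (hd _)

/-- Ostrowski-type lemma: if the steps tend to zero and `xstar` is an isolated
accumulation point, then the whole sequence converges. -/
lemma ostrowski {E : Type*} [NormedAddCommGroup E] [NormedSpace ℝ E] [FiniteDimensional ℝ E]
    (x : ℕ → E)
    (hstep : Tendsto (fun k => ‖x (k + 1) - x k‖) atTop (𝓝 0))
    (xstar : E)
    (hacc : ∃ K : ℕ → ℕ, StrictMono K ∧ Tendsto (fun n => x (K n)) atTop (𝓝 xstar))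
    (ε : ℝ) (hε : 0 < ε)
    (hiso : ∀ y : E,
      (∃ K : ℕ → ℕ, StrictMono K ∧ Tendsto (fun n => x (K n)) atTop (𝓝 y)) →
      y ∈ Metric.ball xstar ε → y = xstar) :
    Tendsto x atTop (𝓝 xstar) := by
  classical
  by_contra hc
  rw [Metric.tendsto_atTop] at hc
  push_neg at hc
  obtain ⟨ρ, hρ, hfar⟩ := hc
  set ρ0 : ℝ := min ρ ε with hρ0def
  have hρ0 : 0 < ρ0 := lt_min hρ hε
  have hρ0ε : ρ0 ≤ ε := min_le_right _ _
  have hfar0 : ∀ N, ∃ n ≥ N, ρ0 ≤ dist (x n) xstar := by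
    intro N
    obtain ⟨n, hn, hn'⟩ := hfar N
    exact ⟨n, hn, le_trans (min_le_left _ _) hn'⟩
  obtain ⟨K, hK, hKt⟩ := hacc
  have hnear : ∀ N, ∃ n ≥ N, dist (x n) xstar < ρ0 / 3 := by
    intro N
    obtain ⟨I, hI⟩ := Metric.tendsto_atTop.1 hKt (ρ0 / 3) (by linarith)
    refine ⟨K (max N I), le_trans (le_max_left _ _) (hK.le_apply), hI _ (le_max_right _ _)⟩
  obtain ⟨N0, hN0⟩ := Metric.tendsto_atTop.1 hstep (ρ0 / 3) (by linarith)
  have hN0' : ∀ k ≥ N0, ‖x (k + 1) - x k‖ < ρ0 / 3 := by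
    intro k hk
    have := hN0 k hk
    rw [Real.dist_eq, sub_zero, abs_of_nonneg (norm_nonneg _)] at this
    exact this
  have C : ∀ N, ∃ n, N ≤ n ∧ ρ0 / 3 ≤ dist (x n) xstar ∧ dist (x n) xstar ≤ 2 * ρ0 / 3 := by
    intro N
    obtain ⟨a, ha, haa⟩ := hnear (max N N0)
    obtain ⟨b, hb, hbb⟩ := hfar0 a
    have hPb : a ≤ b ∧ ρ0 / 3 ≤ dist (x b) xstar := ⟨hb, by linarith⟩
    have hex : ∃ i, a ≤ i ∧ ρ0 / 3 ≤ dist (x i) xstar := ⟨b, hPb⟩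
    set n := Nat.find hex with hn
    obtain ⟨hna, hnd⟩ := Nat.find_spec hex
    rw [← hn] at hna hnd
    have hne : n ≠ a := by
      intro h
      rw [h] at hnd
      linarith
    have hna1 : a + 1 ≤ n := by omega
    have hprev : ¬(a ≤ n - 1 ∧ ρ0 / 3 ≤ dist (x (n - 1)) xstar) :=
      Nat.find_min hex (by omega)
    have hprev' : dist (x (n - 1)) xstar < ρ0 / 3 := by
      by_contra h
      exact hprev ⟨by omega, by linarith [not_lt.1 h]⟩
    have hstepn : ‖x (n - 1 + 1) - x (n - 1)‖ < ρ0 / 3 :=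
      hN0' (n - 1) (by omega)
    have h1 : n - 1 + 1 = n := by omega
    rw [h1] at hstepn
    have hdn : dist (x n) xstar ≤ dist (x n) (x (n - 1)) + dist (x (n - 1)) xstar :=
      dist_triangle _ _ _
    rw [dist_eq_norm (x n) (x (n - 1))] at hdn
    refine ⟨n, by omega, hnd, by linarith⟩
  choose F hF1 hF2 hF3 using C
  let g : ℕ → ℕ := fun i => Nat.rec (F 0) (fun _ prev => F (prev + 1)) i
  have hg0 : g 0 = F 0 := rfl
  have hgs : ∀ i, g (i + 1) = F (g i + 1) := fun i => rfl
  have hgmono : StrictMono g := by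
    apply strictMono_nat_of_lt_succ
    intro i
    rw [hgs]
    have := hF1 (g i + 1)
    omega
  set A : Set E := Metric.closedBall xstar (2 * ρ0 / 3) ∩ {y | ρ0 / 3 ≤ dist y xstar}
    with hA
  have hAcomp : IsCompact A :=
    (isCompact_closedBall xstar _).inter_right
      (isClosed_le continuous_const (continuous_id.dist continuous_const))
  have hmemA : ∀ i, x (g i) ∈ A := by
    intro i
    rcases i with _ | i
    · exact ⟨Metric.mem_closedBall.2 (hF3 0), hF2 0⟩
    · exact ⟨Metric.mem_closedBall.2 (hF3 (g i + 1)), hF2 (g i + 1)⟩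
  obtain ⟨y, hyA, φ', hφ', hyt⟩ := hAcomp.tendsto_subseq hmemA
  have hyacc : ∃ K : ℕ → ℕ, StrictMono K ∧ Tendsto (fun n => x (K n)) atTop (𝓝 y) :=
    ⟨g ∘ φ', hgmono.comp hφ', hyt⟩
  have hyball : y ∈ Metric.ball xstar ε := by
    have : dist y xstar ≤ 2 * ρ0 / 3 := Metric.mem_closedBall.1 hyA.1
    exact Metric.mem_ball.2 (by linarith)
  have := hiso y hyacc hyball
  have h2 : ρ0 / 3 ≤ dist y xstar := hyA.2
  rw [this, dist_self] at h2
  linarith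

section MainProof

variable {E : Type*} [NormedAddCommGroup E] [InnerProductSpace ℝ E] [FiniteDimensional ℝ E]

theorem stmt_19'
    (f : E → ℝ) (φ : E → EReal) (hf : ContDiff ℝ 1 f)
    (hbot : ∀ z : E, φ z ≠ ⊥) (hlsc : LowerSemicontinuous φ)
    (τ γmin γmax δ : ℝ) (m : ℕ) (hτ : 1 < τ) (hγmin : 0 < γmin) (hγmm : γmin ≤ γmax)
    (hδ : δ ∈ Set.Ioo (0 : ℝ) 1)
    (x : ℕ → E) (γ : ℕ → ℝ)
    (hpsibdd : PsiBddBelow f φ) (haff : AffineBoundedBelow φ)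
    (hucont : UnifContOnLevelSet f φ (x 0))
    (hM : NonmonoPG f φ τ γmin γmax δ m x γ)
    (xstar : E)
    (hacc : ∃ K : ℕ → ℕ, StrictMono K ∧ Tendsto (fun n => x (K n)) atTop (𝓝 xstar))
    (ε : ℝ) (hε : 0 < ε)
    (hiso : ∀ y : E,
      (∃ K : ℕ → ℕ, StrictMono K ∧ Tendsto (fun n => x (K n)) atTop (𝓝 y)) →
      y ∈ Metric.ball xstar ε → y = xstar) :
    Tendsto x atTop (𝓝 xstar) := by
  set Ψ : ℕ → ℝ := fun k => f (x k) + (φ (x k)).toReal with hΨdef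
  set d : ℕ → ℝ := fun k => ‖x (k + 1) - x k‖ with hddef
  have hΨ : ∀ k, psi f φ (x k) = ((Ψ k : ℝ) : EReal) := by
    intro k
    rw [hΨdef]
    simp only [psi]
    rw [EReal.coe_add, EReal.coe_toReal (hM.dom k) (hbot _)]
  have hcoemax : ∀ a b : ℝ, ((a ⊔ b : ℝ) : EReal) = (a : EReal) ⊔ (b : EReal) := by
    intro a b
    rcases le_total a b with h | h
    · rw [sup_eq_right.2 h, sup_eq_right.2 (EReal.coe_le_coe_iff.2 h)]
    · rw [sup_eq_left.2 h, sup_eq_left.2 (EReal.coe_le_coe_iff.2 h)]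
  have hnmax : ∀ k, nmax f φ x m k = ((nmaxR Ψ m k : ℝ) : EReal) := by
    intro k
    have H : (Finset.range (min k m + 1)).Nonempty :=
      ⟨0, Finset.mem_range.2 (Nat.succ_pos _)⟩
    unfold nmax nmaxR
    rw [Finset.sup_congr rfl (fun j _ => hΨ (k - j)), ← Finset.sup'_eq_sup H,
      Finset.comp_sup'_eq_sup'_comp H (fun r : ℝ => (r : EReal))
        (fun a b => hcoemax a b)]
    rfl
  have hγ : ∀ k, γmin ≤ γ k := by
    intro k
    obtain ⟨γ0, i, hmem, heq, -⟩ := hM.stepsize k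
    have h1 : (1 : ℝ) ≤ τ ^ i := one_le_pow₀ hτ.le
    have h2 := hmem.1
    rw [heq]
    nlinarith
  have hacc_real : ∀ k, Ψ (k + 1) + (δ * γmin / 2) * d k ^ 2 ≤ nmaxR Ψ m k := by
    intro k
    have h := hM.accept k
    rw [hΨ, hnmax, ← EReal.coe_add, EReal.coe_le_coe_iff] at h
    have h2 : δ * γmin / 2 * d k ^ 2 ≤ δ * γ k / 2 * d k ^ 2 :=
      mul_le_mul_of_nonneg_right (by nlinarith [hγ k, hδ.1]) (sq_nonneg _)
    simp only [hddef] at h2 ⊢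
    linarith
  obtain ⟨c, hc⟩ := hpsibdd
  have hbdd : ∀ k, c ≤ Ψ k := by
    intro k
    have := hc (x k) (hM.dom k)
    rw [hΨ] at this
    exact_mod_cast this
  have hsucc : ∀ k, Ψ (k + 1) ≤ nmaxR Ψ m k := by
    intro k
    have h0 : (0 : ℝ) ≤ δ * γmin / 2 :=
      div_nonneg (mul_nonneg hδ.1.le hγmin.le) (by norm_num)
    have h1 : (0:ℝ) ≤ δ * γmin / 2 * d k ^ 2 := mul_nonneg h0 (sq_nonneg _)
    have h2 := hacc_real k
    exact le_trans (le_add_of_nonneg_right h1) h2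
  have hlevel : ∀ k, psi f φ (x k) ≤ psi f φ (x 0) := by
    intro k
    rw [hΨ, hΨ, EReal.coe_le_coe_iff]
    calc Ψ k ≤ nmaxR Ψ m k := le_nmaxR Ψ m k
      _ ≤ nmaxR Ψ m 0 := nmaxR_antitone Ψ m hsucc (Nat.zero_le k)
      _ = Ψ 0 := nmaxR_zero Ψ m
  have huc : ∀ ε' : ℝ, 0 < ε' → ∃ η : ℝ, 0 < η ∧
      ∀ k, d k ≤ η → |Ψ (k + 1) - Ψ k| ≤ ε' := by
    intro ε' hε'
    obtain ⟨η, hη, hp⟩ := hucont ε' hε'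
    refine ⟨η, hη, fun k hdk => ?_⟩
    rw [abs_le]
    constructor
    · have := hp (x k) (x (k + 1)) (hlevel k) (hlevel (k + 1))
        (by rw [norm_sub_rev]; exact hdk)
      rw [hΨ, hΨ, ← EReal.coe_add, EReal.coe_le_coe_iff] at this
      linarith
    · have := hp (x (k + 1)) (x k) (hlevel (k + 1)) (hlevel k) hdk
      rw [hΨ, hΨ, ← EReal.coe_add, EReal.coe_le_coe_iff] at this
      linarith
  have hdtend : Tendsto d atTop (𝓝 0) :=
    grippo Ψ d m (δ * γmin / 2) c (by nlinarith [hδ.1, hγmin]) (fun k => norm_nonneg _)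
      hacc_real hbdd huc
  exact ostrowski x hdtend xstar hacc ε hε hiso

end MainProof

/-- Remark 4.6(4): assume `ψ` is bounded below on `dom φ`, `φ` is bounded below by an
affine function, and `ψ` is uniformly continuous on `L_ψ(x⁰)`. If `xstar` is an isolated
accumulation point of a sequence generated by the nonmonotone proximal gradient method,
then the entire sequence converges to `xstar`. -/
theorem stmt_19
    (f : E → ℝ) (φ : E → EReal) (hf : ContDiff ℝ 1 f)
    (hbot : ∀ z : E, φ z ≠ ⊥) (hlsc : LowerSemicontinuous φ)
    (τ γmin γmax δ : ℝ) (m : ℕ) (hτ : 1 < τ) (hγmin : 0 < γmin) (hγmm : γmin ≤ γmax)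
    (hδ : δ ∈ Set.Ioo (0 : ℝ) 1)
    (x : ℕ → E) (γ : ℕ → ℝ)
    (hpsibdd : PsiBddBelow f φ) (haff : AffineBoundedBelow φ)
    (hucont : UnifContOnLevelSet f φ (x 0))
    (hM : NonmonoPG f φ τ γmin γmax δ m x γ)
    (xstar : E)
    (hacc : ∃ K : ℕ → ℕ, StrictMono K ∧ Tendsto (fun n => x (K n)) atTop (𝓝 xstar))
    (ε : ℝ) (hε : 0 < ε)
    (hiso : ∀ y : E,
      (∃ K : ℕ → ℕ, StrictMono K ∧ Tendsto (fun n => x (K n)) atTop (𝓝 y)) →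
      y ∈ Metric.ball xstar ε → y = xstar) :
    Tendsto x atTop (𝓝 xstar) := by
  exact stmt_19' f φ hf hbot hlsc τ γmin γmax δ m hτ hγmin hγmm hδ x γ hpsibdd haff hucont hM xstar hacc ε hε hiso
end
end
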